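/- Let Σ ∈ ℝ^{q×q} be symmetric positive definite. Then the D-trace loss L_D(Θ, Σ) = (1/2)⟨Θ², Σ⟩_F − tr(Θ), viewed as a function on the space of symmetric q×q matrices, is strictly convex and has the unique minimizer Θ = Σ^{-1}. -/

import Mathlib

/-
On symmetric matrices `tr(Θ²Σ) = tr(ΘᵀΣΘ)`, so the D-trace loss is the energy
`½ ⟨Θ, Θ⟩_Σ − ⟨Θ, Σ⁻¹⟩_Σ` of the bilinear form `⟨A, C⟩_Σ = tr(AᵀΣC)`, which is symmetric and
positive definite because `Σ` is. Completing the square gives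
`L_D(Θ) = L_D(Σ⁻¹) + ½ ⟨Θ − Σ⁻¹, Θ − Σ⁻¹⟩_Σ`, and along a convex combination the energy drops by
`½ ab ⟨x − y, x − y⟩_Σ > 0`, which is strict convexity; a strictly convex function has at most
one minimizer.
-/

open Matrix

noncomputable section

/-- The Frobenius inner product `⟨M, N⟩_F = tr(Mᵀ N)`. -/
def frobInner {q : Type*} [Fintype q] (M N : Matrix q q ℝ) : ℝ := (Mᵀ * N).trace

/-- The D-trace loss `L_D(Θ, Σ) = (1/2)⟨Θ², Σ⟩_F − tr(Θ)`. -/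
def dtraceLoss {q : ℕ} (S T : Matrix (Fin q) (Fin q) ℝ) : ℝ :=
  (1 / 2) * frobInner (T * T) S - T.trace

open Set

namespace LinearMap.BilinForm

variable {𝕜 E : Type*} [Field 𝕜] [LinearOrder 𝕜] [IsStrictOrderedRing 𝕜] [AddCommGroup E]
  [Module 𝕜 E] {B : LinearMap.BilinForm 𝕜 E}

def quadraticEnergy (B : LinearMap.BilinForm 𝕜 E) (c x : E) : 𝕜 := 2⁻¹ * B x x - B x c

lemma IsSymm.quadraticEnergy_eq (hB : B.IsSymm) (c x : E) :
    B.quadraticEnergy c x = B.quadraticEnergy c c + 2⁻¹ * B (x - c) (x - c) := by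
  have hcx : B c x = B x c := hB.eq c x
  simp only [quadraticEnergy, map_sub, LinearMap.sub_apply, hcx]
  ring

lemma IsSymm.apply_convexComb_self (hB : B.IsSymm) {a b : 𝕜} (hab : a + b = 1) (x y : E) :
    B (a • x + b • y) (a • x + b • y) =
      a * B x x + b * B y y - a * b * B (x - y) (x - y) := by
  have hyx : B y x = B x y := hB.eq y x
  simp only [map_add, map_sub, map_smul, LinearMap.add_apply, LinearMap.sub_apply,
    LinearMap.smul_apply, smul_eq_mul, hyx]
  obtain rfl : b = 1 - a := by linear_combination hab
  ring

lemma IsSymm.strictConvexOn_quadraticEnergy (hB : B.IsSymm) (hpos : ∀ x ≠ 0, 0 < B x x)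
    (c : E) : StrictConvexOn 𝕜 univ (B.quadraticEnergy c) := by
  refine ⟨convex_univ, fun x _ y _ hxy a b ha hb hab => ?_⟩
  have hgap : 0 < a * b * B (x - y) (x - y) :=
    mul_pos (mul_pos ha hb) (hpos _ (sub_ne_zero.mpr hxy))
  have hlin : B (a • x + b • y) c = a * B x c + b * B y c := by
    simp only [map_add, map_smul, LinearMap.add_apply, LinearMap.smul_apply, smul_eq_mul]
  simp only [quadraticEnergy, hB.apply_convexComb_self hab, hlin, smul_eq_mul]
  linarith

lemma IsSymm.quadraticEnergy_self_le (hB : B.IsSymm) (hnonneg : ∀ x, 0 ≤ B x x) (c x : E) :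
    B.quadraticEnergy c c ≤ B.quadraticEnergy c x := by
  rw [hB.quadraticEnergy_eq c x]
  linarith [hnonneg (x - c)]

end LinearMap.BilinForm

namespace Matrix

variable {n : Type*} [Fintype n]

omit [Fintype n] in
lemma convex_setOf_isSymm {𝕜 α : Type*} [Semiring 𝕜] [PartialOrder 𝕜] [AddCommMonoid α]
    [Module 𝕜 α] : Convex 𝕜 {A : Matrix n n α | A.IsSymm} :=
  fun _ hA _ hC a b _ _ _ => (IsSymm.smul hA a).add (IsSymm.smul hC b)

def weightedFrobeniusForm {R : Type*} [CommRing R] (S : Matrix n n R) :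
    LinearMap.BilinForm R (Matrix n n R) :=
  LinearMap.mk₂ R (fun A C => (Aᵀ * S * C).trace)
    (fun A A' C => by simp only [transpose_add, Matrix.add_mul, trace_add])
    (fun r A C => by simp only [transpose_smul, Matrix.smul_mul, trace_smul])
    (fun A C C' => by simp only [Matrix.mul_add, trace_add])
    (fun r A C => by simp only [Matrix.mul_smul, trace_smul])

section

variable {R : Type*} [CommRing R] {S : Matrix n n R}

@[simp]
lemma weightedFrobeniusForm_apply (A C : Matrix n n R) :
    weightedFrobeniusForm S A C = (Aᵀ * S * C).trace := rfl

lemma IsSymm.weightedFrobeniusForm_isSymm (hS : S.IsSymm) :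
    (weightedFrobeniusForm S).IsSymm := by
  refine ⟨fun A C => ?_⟩
  simp only [weightedFrobeniusForm_apply]
  rw [← trace_transpose, transpose_mul, transpose_mul, transpose_transpose, hS.eq,
    Matrix.mul_assoc]

lemma weightedFrobeniusForm_apply_inv [DecidableEq n] (hS : IsUnit S.det) (A : Matrix n n R) :
    weightedFrobeniusForm S A S⁻¹ = A.trace := by
  rw [weightedFrobeniusForm_apply, Matrix.mul_assoc, mul_nonsing_inv S hS, Matrix.mul_one,
    trace_transpose]

lemma weightedFrobeniusForm_self_eq_sum (A : Matrix n n R) :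
    weightedFrobeniusForm S A A = ∑ j, Aᵀ j ⬝ᵥ S *ᵥ Aᵀ j := by
  simp only [weightedFrobeniusForm_apply, trace, diag, mul_mul_apply]

end

lemma PosSemidef.weightedFrobeniusForm_self_nonneg {S : Matrix n n ℝ} (hS : S.PosSemidef)
    (A : Matrix n n ℝ) : 0 ≤ weightedFrobeniusForm S A A := by
  rw [weightedFrobeniusForm_self_eq_sum]
  exact Finset.sum_nonneg fun j _ => by simpa using hS.dotProduct_mulVec_nonneg (Aᵀ j)

lemma PosDef.weightedFrobeniusForm_self_pos {S : Matrix n n ℝ} (hS : S.PosDef)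
    {A : Matrix n n ℝ} (hA : A ≠ 0) : 0 < weightedFrobeniusForm S A A := by
  obtain ⟨j, hj⟩ : ∃ j, Aᵀ j ≠ 0 := by
    by_contra! h
    exact hA (transpose_eq_zero.mp (funext h))
  rw [weightedFrobeniusForm_self_eq_sum]
  refine Finset.sum_pos' (fun k _ => ?_) ⟨j, Finset.mem_univ j, ?_⟩
  · simpa using hS.posSemidef.dotProduct_mulVec_nonneg (Aᵀ k)
  · simpa using hS.dotProduct_mulVec_pos hj

end Matrix

lemma dtraceLoss_eq_quadraticEnergy {q : ℕ} {S T : Matrix (Fin q) (Fin q) ℝ}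
    (hS : IsUnit S.det) (hT : T.IsSymm) :
    dtraceLoss S T = (weightedFrobeniusForm S).quadraticEnergy S⁻¹ T := by
  have hfrob : frobInner (T * T) S = (T * S * T).trace := by
    rw [frobInner, transpose_mul, hT.eq, trace_mul_cycle T S T]
  rw [dtraceLoss, LinearMap.BilinForm.quadraticEnergy, weightedFrobeniusForm_apply_inv hS, hfrob,
    weightedFrobeniusForm_apply, hT.eq]
  ring

/-- for `Σ` symmetric positive definite, the D-trace loss is strictly convex
on the space of symmetric matrices and has the unique minimizer `Σ⁻¹` there. -/
theorem stmt15 (q : ℕ) (S : Matrix (Fin q) (Fin q) ℝ) (hS : S.PosDef) :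
    StrictConvexOn ℝ {T : Matrix (Fin q) (Fin q) ℝ | T.IsSymm} (fun T => dtraceLoss S T) ∧
    (∀ T : Matrix (Fin q) (Fin q) ℝ, T.IsSymm → dtraceLoss S S⁻¹ ≤ dtraceLoss S T) ∧
    (∀ T : Matrix (Fin q) (Fin q) ℝ, T.IsSymm →
      (∀ T' : Matrix (Fin q) (Fin q) ℝ, T'.IsSymm → dtraceLoss S T ≤ dtraceLoss S T') →
      T = S⁻¹) := by
  have hSsymm : S.IsSymm := by simpa using hS.isHermitian
  have hdet : IsUnit S.det := (isUnit_iff_isUnit_det S).mp hS.isUnit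
  have hB := hSsymm.weightedFrobeniusForm_isSymm
  have hloss : EqOn ((weightedFrobeniusForm S).quadraticEnergy S⁻¹) (dtraceLoss S)
      {T | T.IsSymm} := fun T hT => (dtraceLoss_eq_quadraticEnergy hdet hT).symm
  have hconvex : StrictConvexOn ℝ {T | T.IsSymm} (dtraceLoss S) :=
    ((hB.strictConvexOn_quadraticEnergy (fun _ => hS.weightedFrobeniusForm_self_pos) S⁻¹).subset
      (subset_univ _) convex_setOf_isSymm).congr hloss
  have hinv : S⁻¹.IsSymm := hSsymm.inv
  have hmin : IsMinOn (dtraceLoss S) {T | T.IsSymm} S⁻¹ := fun T hT => by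
    change dtraceLoss S S⁻¹ ≤ dtraceLoss S T
    rw [← hloss hT, ← hloss hinv]
    exact hB.quadraticEnergy_self_le hS.posSemidef.weightedFrobeniusForm_self_nonneg _ _
  exact ⟨hconvex, fun T hT => hmin hT,
    fun T hT hTmin => hconvex.eq_of_isMinOn (fun T' hT' => hTmin T' hT') hmin hT hinv⟩
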